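/- Let f : ℝ^N → ℝ be convex and differentiable, and β-smooth along coordinate directions, i.e. f(λ + η e_k) ≤ f(λ) + η ∂_k f(λ) + βη²/2 for all λ, η, k. Let λ be a minimizer of f over vectors supported on a set I ⊆ [N], let λ̄ be supported on Ī ⊆ [N] with f(λ) > f(λ̄), and set s = ‖λ̄‖₁. Suppose k satisfies |∂_k f(λ)| ≥ (1−τ) max_j |∂_j f(λ)| for some τ ∈ [0,1). Then there exist η ∈ ℝ and a sign choice such that f(λ) − f(λ + η e_k) ≥ (f(λ) − f(λ̄))² (1−τ)² / (2βs²). -/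

import Mathlib

/-!
Minimality over vectors supported on `I`, together with the coordinatewise quadratic upper bound,
forces `∂_j f(λ) = 0` for `j ∈ I`; hence `⟨∇f(λ), λ⟩ = 0`, and convexity gives
`f(λ) - f(λ̄) ≤ -⟨∇f(λ), λ̄⟩ ≤ max_j |∂_j f(λ)| · s ≤ |∂_k f(λ)| · s / (1 - τ)`.
The coordinate step `η = -∂_k f(λ) / β` decreases `f` by at least `∂_k f(λ)² / (2β)`.
-/

open Set

theorem ConvexOn.le_sub_of_hasFDerivAt {E : Type*} [NormedAddCommGroup E] [NormedSpace ℝ E]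
    {f : E → ℝ} {f' : E →L[ℝ] ℝ} {x : E} (hf : ConvexOn ℝ univ f) (hf' : HasFDerivAt f f' x)
    (v : E) : f' v ≤ f (x + v) - f x := by
  have hline : ConvexOn ℝ univ (fun t : ℝ => f (x + t • v)) :=
    (hf.translate_right x).comp_linearMap (LinearMap.toSpanSingleton ℝ E v)
  have hderiv : HasDerivAt (fun t : ℝ => f (x + t • v)) (f' v) 0 := by
    have hpath : HasDerivAt (fun t : ℝ => x + t • v) v 0 := by
      simpa using ((hasDerivAt_id (0 : ℝ)).smul_const v).const_add x
    simpa using (zero_smul ℝ v ▸ add_zero x ▸ hf').comp_hasDerivAt (0 : ℝ) hpath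
  simpa [slope_def_field] using
    hline.le_slope_of_hasDerivAt (mem_univ 0) (mem_univ 1) zero_lt_one hderiv

theorem ConvexOn.inner_le_sub_of_hasGradientAt {F : Type*} [NormedAddCommGroup F]
    [InnerProductSpace ℝ F] [CompleteSpace F] {f : F → ℝ} {g x : F} (hf : ConvexOn ℝ univ f)
    (hg : HasGradientAt f g x) (v : F) : inner ℝ g v ≤ f (x + v) - f x :=
  hf.le_sub_of_hasFDerivAt hg.hasFDerivAt v

section QuadraticUpperBound

variable {E : Type*} [AddCommGroup E] [Module ℝ E] {f : E → ℝ} {x v : E} {a β : ℝ}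

theorem sq_div_le_sub_of_le_quadratic (hβ : 0 < β)
    (hf : ∀ η : ℝ, f (x + η • v) ≤ f x + η * a + β * η ^ 2 / 2) :
    a ^ 2 / (2 * β) ≤ f x - f (x + (-(a / β)) • v) := by
  have hstep : -(a / β) * a + β * (-(a / β)) ^ 2 / 2 = -(a ^ 2 / (2 * β)) := by
    field_simp
    ring
  linarith [hf (-(a / β))]

theorem eq_zero_of_le_quadratic_of_forall_le (hβ : 0 < β)
    (hf : ∀ η : ℝ, f (x + η • v) ≤ f x + η * a + β * η ^ 2 / 2)
    (hmin : ∀ η : ℝ, f x ≤ f (x + η • v)) : a = 0 := by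
  have : a ^ 2 / (2 * β) ≤ 0 := by
    linarith [hmin (-(a / β)), sq_div_le_sub_of_le_quadratic hβ hf]
  rw [div_le_iff₀ (by positivity), zero_mul] at this
  exact pow_eq_zero_iff two_ne_zero |>.mp (le_antisymm this (sq_nonneg a))

end QuadraticUpperBound

theorem mul_neg_sum_mul_le {ι : Type*} (s : Finset ι) {a b : ι → ℝ} {c A : ℝ} (hc : 0 ≤ c)
    (h : ∀ j ∈ s, c * |a j| ≤ A) : c * -∑ j ∈ s, a j * b j ≤ A * ∑ j ∈ s, |b j| := by
  rw [← Finset.sum_neg_distrib, Finset.mul_sum, Finset.mul_sum]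
  refine Finset.sum_le_sum fun j hj => ?_
  calc c * -(a j * b j) ≤ c * |a j| * |b j| := by
        rw [mul_assoc, ← abs_mul]; exact mul_le_mul_of_nonneg_left (neg_le_abs _) hc
    _ ≤ A * |b j| := mul_le_mul_of_nonneg_right (h j hj) (abs_nonneg _)

theorem sq_div_le_sq_div_of_le_mul {c a s β : ℝ} (hβ : 0 < β) (hc : 0 < c) (h : c ≤ |a| * s) :
    c ^ 2 / (2 * β * s ^ 2) ≤ a ^ 2 / (2 * β) := by
  have hs : 0 < s := pos_of_mul_pos_right (hc.trans_le h) (abs_nonneg a)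
  rw [div_le_div_iff₀ (by positivity) (by positivity)]
  have : c ^ 2 ≤ (|a| * s) ^ 2 := pow_le_pow_left₀ hc.le h 2
  rw [mul_pow, sq_abs] at this
  nlinarith

theorem geco_key_lemma_general (N : ℕ) (f : EuclideanSpace ℝ (Fin N) → ℝ)
    (g : EuclideanSpace ℝ (Fin N) → EuclideanSpace ℝ (Fin N))
    (hconv : ConvexOn ℝ Set.univ f)
    (hgrad : ∀ x, HasGradientAt f (g x) x)
    (β : ℝ) (hβ : 0 < β)
    (hsmooth : ∀ (x : EuclideanSpace ℝ (Fin N)) (η : ℝ) (k : Fin N),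
      f (x + η • EuclideanSpace.single k 1) ≤ f x + η * g x k + β * η ^ 2 / 2)
    (I : Finset (Fin N)) (lam lbar : EuclideanSpace ℝ (Fin N))
    (hlamsupp : ∀ j, j ∉ I → lam j = 0)
    (hmin : ∀ μ : EuclideanSpace ℝ (Fin N), (∀ j, j ∉ I → μ j = 0) → f lam ≤ f μ)
    (hgap : f lbar < f lam)
    (s : ℝ) (hs : s = ∑ j, |lbar j|)
    (τ : ℝ) (hτ1 : τ < 1)
    (k : Fin N) (hk : ∀ j, (1 - τ) * |g lam j| ≤ |g lam k|) :
    ∃ η : ℝ, f lam - f (lam + η • EuclideanSpace.single k 1) ≥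
      (f lam - f lbar) ^ 2 * (1 - τ) ^ 2 / (2 * β * s ^ 2) := by
  have hgrad_supp : ∀ j ∈ I, g lam j = 0 := fun j hj =>
    eq_zero_of_le_quadratic_of_forall_le hβ (hsmooth lam · j) fun η => hmin _ fun i hi => by
      simp [hlamsupp i hi, ne_of_mem_of_not_mem hj hi |>.symm]
  have hslack : inner ℝ (g lam) lam = 0 := by
    refine Finset.sum_eq_zero fun j _ => ?_
    by_cases hj : j ∈ I <;> simp [hgrad_supp, hlamsupp, hj]
  have hgap_le : f lam - f lbar ≤ -∑ j, g lam j * lbar j := by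
    have := hconv.inner_le_sub_of_hasGradientAt (hgrad lam) (lbar - lam)
    rw [add_sub_cancel, inner_sub_right, hslack, sub_zero, PiLp.inner_apply] at this
    simp only [RCLike.inner_apply, conj_trivial, mul_comm (lbar _)] at this
    linarith
  have hgap_bound : (f lam - f lbar) * (1 - τ) ≤ |g lam k| * s := by
    have hτ : 0 ≤ 1 - τ := sub_nonneg.2 hτ1.le
    calc (f lam - f lbar) * (1 - τ) ≤ (1 - τ) * -∑ j, g lam j * lbar j := by
          rw [mul_comm]; exact mul_le_mul_of_nonneg_left hgap_le hτ
      _ ≤ |g lam k| * s := hs ▸ mul_neg_sum_mul_le _ hτ fun j _ => hk j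
  refine ⟨-(g lam k / β), ?_⟩
  calc (f lam - f lbar) ^ 2 * (1 - τ) ^ 2 / (2 * β * s ^ 2)
      = ((f lam - f lbar) * (1 - τ)) ^ 2 / (2 * β * s ^ 2) := by rw [mul_pow]
    _ ≤ g lam k ^ 2 / (2 * β) :=
      sq_div_le_sq_div_of_le_mul hβ (mul_pos (sub_pos.2 hgap) (sub_pos.2 hτ1)) hgap_bound
    _ ≤ _ := sq_div_le_sub_of_le_quadratic hβ (hsmooth lam · k)

theorem geco_key_lemma (N : ℕ) (f : EuclideanSpace ℝ (Fin N) → ℝ)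
    (g : EuclideanSpace ℝ (Fin N) → EuclideanSpace ℝ (Fin N))
    (hconv : ConvexOn ℝ Set.univ f)
    (hgrad : ∀ x, HasGradientAt f (g x) x)
    (β : ℝ) (hβ : 0 < β)
    (hsmooth : ∀ (x : EuclideanSpace ℝ (Fin N)) (η : ℝ) (k : Fin N),
      f (x + η • EuclideanSpace.single k 1) ≤ f x + η * g x k + β * η ^ 2 / 2)
    (I Ibar : Finset (Fin N)) (lam lbar : EuclideanSpace ℝ (Fin N))
    (hlamsupp : ∀ j, j ∉ I → lam j = 0)
    (hmin : ∀ μ : EuclideanSpace ℝ (Fin N), (∀ j, j ∉ I → μ j = 0) → f lam ≤ f μ)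
    (hlbarsupp : ∀ j, j ∉ Ibar → lbar j = 0)
    (hgap : f lbar < f lam)
    (s : ℝ) (hs : s = ∑ j, |lbar j|)
    (τ : ℝ) (hτ0 : 0 ≤ τ) (hτ1 : τ < 1)
    (k : Fin N) (hk : ∀ j, (1 - τ) * |g lam j| ≤ |g lam k|) :
    ∃ η : ℝ, f lam - f (lam + η • EuclideanSpace.single k 1) ≥
      (f lam - f lbar) ^ 2 * (1 - τ) ^ 2 / (2 * β * s ^ 2) :=
  geco_key_lemma_general N f g hconv hgrad β hβ hsmooth I lam lbar hlamsupp hmin hgap s hs τ hτ1 k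
    hk
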